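/- Let Γ be a group and let f : Γ → ℂ be a parallelogram function. Then f factors through the quotient Γ/Γ⁽³⁾ by the third term of the lower central series: for every γ ∈ Γ and every h in the subgroup [[Γ,Γ],Γ] (the second term of Mathlib's lowerCentralSeries, i.e. lowerCentralSeries Γ 2), f(γh) = f(γ). -/

import Mathlib

private def Phi {Γ : Type*} [Group Γ] (f : Γ → ℂ) (a b c : Γ) : ℂ :=
  f (a * b * c) - f (a * b) - f (a * c) - f (b * c) + f a + f b + f c

private lemma phi_add {Γ : Type*} [Group Γ] (f : Γ → ℂ)
    (hf : ∀ x y : Γ, f (x * y) + f (x * y⁻¹) = 2 * f x + 2 * f y) (a b c d : Γ) :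
    Phi f (a * b) c d = Phi f a c d + Phi f b c d := by
  have h0 := hf (1 : Γ) (1 : Γ)
  have h1 := hf (1 : Γ) (a * d * c⁻¹)
  have h2 := hf (1 : Γ) (b * d⁻¹ * c⁻¹)
  have h3 := hf (1 : Γ) (a * d * b⁻¹ * c⁻¹)
  have h4 := hf (1 : Γ) (a * d * c⁻¹ * b⁻¹)
  have h5 := hf (1 : Γ) (b * d⁻¹ * a⁻¹ * c⁻¹)
  have h6 := hf (a) (b * d⁻¹)
  have h7 := hf (a) (c * d⁻¹)
  have h8 := hf (a) (b * c * d⁻¹)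
  have h9 := hf (a) (b * d⁻¹ * c⁻¹)
  have h10 := hf (a) (c * b * d⁻¹)
  have h11 := hf (b) (d)
  have h12 := hf (b) (c * a * d)
  have h13 := hf (c) (d)
  have h14 := hf (c) (a * d)
  have h15 := hf (c) (b * d⁻¹)
  have h16 := hf (c) (a * d * b⁻¹)
  have h17 := hf (a * b) (d)
  have h18 := hf (a * b) (c * d)
  have h19 := hf (a * c) (d)
  have h20 := hf (a * c) (b * d⁻¹)
  have h21 := hf (b * c) (d)
  have h22 := hf (b * c) (a * d)
  have h23 := hf (a * b * c) (d)
  simp only [Phi, one_mul, mul_one, inv_one, mul_inv_rev, inv_inv, mul_assoc,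
    inv_mul_cancel_left, mul_inv_cancel_left, inv_mul_cancel, mul_inv_cancel] at h0 h1 h2 h3 h4 h5 h6 h7 h8 h9 h10 h11 h12 h13 h14 h15 h16 h17 h18 h19 h20 h21 h22 h23 ⊢
  linear_combination (-1/2 : ℂ) * h0 + h1 + h2 + (-1/2 : ℂ) * h3 + (-1/2 : ℂ) * h4 + (-1/2 : ℂ) * h5 + h6 + h7 + (-1/2 : ℂ) * h8 + (-1/2 : ℂ) * h9 + (-1/2 : ℂ) * h10 + h11 + (-1/2 : ℂ) * h12 + (2 : ℂ) * h13 - h14 - h15 + (1/2 : ℂ) * h16 - h17 + (1/2 : ℂ) * h18 - h19 + (1/2 : ℂ) * h20 - h21 + (1/2 : ℂ) * h22 + (1/2 : ℂ) * h23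

private lemma f_mul_commutator {Γ : Type*} [Group Γ] (f : Γ → ℂ)
    (hf : ∀ x y : Γ, f (x * y) + f (x * y⁻¹) = 2 * f x + 2 * f y) (γ x y : Γ) :
    f (γ * (x * y * x⁻¹ * y⁻¹)) = f γ + 2 * Phi f x⁻¹ y⁻¹ γ := by
  have h0 := hf (1 : Γ) (1 : Γ)
  have h1 := hf (1 : Γ) (γ)
  have h2 := hf (1 : Γ) (x)
  have h3 := hf (1 : Γ) (y)
  have h4 := hf (1 : Γ) (γ * x)
  have h5 := hf (1 : Γ) (γ * x⁻¹)
  have h6 := hf (1 : Γ) (γ * y⁻¹)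
  have h7 := hf (1 : Γ) (γ⁻¹ * x)
  have h8 := hf (1 : Γ) (γ⁻¹ * x⁻¹)
  have h9 := hf (1 : Γ) (γ⁻¹ * y)
  have h10 := hf (1 : Γ) (γ⁻¹ * y⁻¹)
  have h11 := hf (1 : Γ) (x * y⁻¹)
  have h12 := hf (1 : Γ) (x⁻¹ * y⁻¹)
  have h13 := hf (1 : Γ) (γ * y * x⁻¹)
  have h14 := hf (1 : Γ) (γ * y⁻¹ * x⁻¹)
  have h15 := hf (1 : Γ) (γ⁻¹ * x⁻¹ * y⁻¹)
  have h16 := hf (1 : Γ) (γ⁻¹ * y * x)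
  have h17 := hf (1 : Γ) (x * γ * y⁻¹)
  have h18 := hf (1 : Γ) (x * y * x⁻¹)
  have h19 := hf (1 : Γ) (γ * y * x⁻¹ * x⁻¹)
  have h20 := hf (1 : Γ) (x * γ * y * x⁻¹)
  have h21 := hf (1 : Γ) (γ * x * y * x⁻¹ * y⁻¹)
  have h22 := hf (1 : Γ) (x * y⁻¹ * x⁻¹ * γ⁻¹ * y⁻¹)
  have h23 := hf (γ) (x)
  have h24 := hf (γ) (y)
  have h25 := hf (γ) (x * y)
  have h26 := hf (γ) (x * y⁻¹)
  have h27 := hf (γ) (x * x * y⁻¹)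
  have h28 := hf (γ⁻¹) (x)
  have h29 := hf (γ⁻¹) (y)
  have h30 := hf (γ⁻¹) (x⁻¹ * y⁻¹)
  have h31 := hf (x) (γ)
  have h32 := hf (x) (x)
  have h33 := hf (x) (y)
  have h34 := hf (x) (γ * y)
  have h35 := hf (x) (γ * y⁻¹)
  have h36 := hf (x) (x * y)
  have h37 := hf (x) (x * y⁻¹)
  have h38 := hf (x) (γ * y * x⁻¹)
  have h39 := hf (x) (x * γ * y)
  have h40 := hf (x) (y * γ * x * y)
  have h41 := hf (y) (γ)
  have h42 := hf (y) (x)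
  have h43 := hf (y) (γ⁻¹ * x⁻¹)
  have h44 := hf (y) (γ * x * y)
  have h45 := hf (y) (γ * x * y * x⁻¹)
  have h46 := hf (γ * x) (y)
  have h47 := hf (γ * x) (x * y⁻¹)
  have h48 := hf (x * x) (y)
  have h49 := hf (x * x) (γ * y)
  have h50 := hf (x * y) (γ * x * y)
  simp only [Phi, one_mul, mul_one, inv_one, mul_inv_rev, inv_inv, mul_assoc,
    inv_mul_cancel_left, mul_inv_cancel_left, inv_mul_cancel, mul_inv_cancel] at h0 h1 h2 h3 h4 h5 h6 h7 h8 h9 h10 h11 h12 h13 h14 h15 h16 h17 h18 h19 h20 h21 h22 h23 h24 h25 h26 h27 h28 h29 h30 h31 h32 h33 h34 h35 h36 h37 h38 h39 h40 h41 h42 h43 h44 h45 h46 h47 h48 h49 h50 ⊢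
  linear_combination (-3 : ℂ) * h0 + (3 : ℂ) * h1 + (-2 : ℂ) * h2 + (-2 : ℂ) * h3 + (2 : ℂ) * h4 + (-2 : ℂ) * h5 + (2 : ℂ) * h6 + (2 : ℂ) * h7 + (-2 : ℂ) * h8 + (2 : ℂ) * h9 + (2 : ℂ) * h10 + (2 : ℂ) * h11 + (2 : ℂ) * h12 + (2 : ℂ) * h13 + (2 : ℂ) * h14 + (-2 : ℂ) * h15 + (-2 : ℂ) * h16 + (-2 : ℂ) * h17 + (-2 : ℂ) * h18 + (-2 : ℂ) * h19 + h20 - h21 - h22 + (-2 : ℂ) * h23 + (-2 : ℂ) * h24 + (2 : ℂ) * h25 + (4 : ℂ) * h26 + (-2 : ℂ) * h27 + (2 : ℂ) * h28 + (2 : ℂ) * h29 + (-2 : ℂ) * h30 + (2 : ℂ) * h31 + (-2 : ℂ) * h32 + (10 : ℂ) * h33 + (-2 : ℂ) * h34 + (-2 : ℂ) * h35 + (2 : ℂ) * h36 + (-2 : ℂ) * h37 + h38 - h39 - h40 + (-2 : ℂ) * h41 + (-2 : ℂ) * h42 + (2 : ℂ) * h43 + (-2 : ℂ) * h44 + h45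 + (-4 : ℂ) * h46 + (2 : ℂ) * h47 + (-2 : ℂ) * h48 + h49 + h50

theorem parallelogram_factors_through_nilpotent_quotient {Γ : Type*} [Group Γ] (f : Γ → ℂ)
    (hf : ∀ x y : Γ, f (x * y) + f (x * y⁻¹) = 2 * f x + 2 * f y) :
    ∀ γ : Γ, ∀ h ∈ (⊤ : Subgroup Γ).lowerCentralSeries 2, f (γ * h) = f γ := by
  -- basic consequences of additivity of Phi in the first slot
  have phi_one : ∀ c d : Γ, Phi f 1 c d = 0 := by
    intro c d
    have h := phi_add f hf 1 1 c d
    rw [one_mul] at h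
    linear_combination -h
  have phi_inv : ∀ a c d : Γ, Phi f a⁻¹ c d = -Phi f a c d := by
    intro a c d
    have h := phi_add f hf a a⁻¹ c d
    rw [mul_inv_cancel] at h
    linear_combination (phi_one c d) - h
  -- the subgroup of elements killed by Phi in the first slot
  let T : Subgroup Γ :=
    { carrier := {h | ∀ c d : Γ, Phi f h c d = 0}
      one_mem' := fun c d => phi_one c d
      mul_mem' := by
        intro a b ha hb c d
        have h := phi_add f hf a b c d
        rw [ha c d, hb c d] at h
        simpa using h
      inv_mem' := by
        intro a ha c d
        rw [phi_inv, ha c d, neg_zero] }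
  have memT : ∀ g : Γ, g ∈ T ↔ ∀ c d : Γ, Phi f g c d = 0 := fun g => Iff.rfl
  have hcommT : commutator Γ ≤ T := by
    rw [commutator_def, Subgroup.commutator_le]
    intro p _ z _
    rw [memT]
    intro c d
    rw [commutatorElement_def]
    have e1 := phi_add f hf (p * z * p⁻¹) z⁻¹ c d
    have e2 := phi_add f hf (p * z) p⁻¹ c d
    have e3 := phi_add f hf p z c d
    have i1 := phi_inv p c d
    have i2 := phi_inv z c d
    linear_combination e1 + e2 + e3 + i1 + i2
  -- the subgroup of elements h with f (γ * h) = f γ for all γ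
  let S : Subgroup Γ :=
    { carrier := {h | ∀ γ : Γ, f (γ * h) = f γ}
      one_mem' := fun γ => by rw [mul_one]
      mul_mem' := by
        intro a b ha hb γ
        rw [← mul_assoc, hb, ha]
      inv_mem' := by
        intro a ha γ
        have h := ha (γ * a⁻¹)
        rw [mul_assoc, inv_mul_cancel, mul_one] at h; exact h.symm }
  have memS : ∀ g : Γ, g ∈ S ↔ ∀ γ : Γ, f (γ * g) = f γ := fun g => Iff.rfl
  have hle : (⊤ : Subgroup Γ).lowerCentralSeries 2 ≤ S := by
    have h2 : (⊤ : Subgroup Γ).lowerCentralSeries 2 = ⁅(⊤ : Subgroup Γ).lowerCentralSeries 1, (⊤ : Subgroup Γ)⁆ :=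
      Subgroup.lowerCentralSeries_succ (⊤ : Subgroup Γ) 1
    rw [h2, Subgroup.commutator_le]
    intro p hp z _
    rw [memS]
    intro γ
    rw [Subgroup.top_lowerCentralSeries_one] at hp
    have hpT : p⁻¹ ∈ T := T.inv_mem (hcommT hp)
    have h3 := f_mul_commutator f hf γ p z
    rw [commutatorElement_def, ← mul_assoc, ← mul_assoc, ← mul_assoc] at *
    rw [h3, (memT p⁻¹).mp hpT z⁻¹ γ]
    ring
  intro γ h hmem
  exact hle hmem γ
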